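/- Let G be a 3-regular graph and f: E(G) → {0,1} a function of even parity. Then the CFI graph X_f(G) has edge expansion Ex(X_f(G)) ≥ Ex(G)/54. -/

import Mathlib

/-!
The projection `X_f(G) → G` that sends a gadget to its vertex has fibers of ten vertices, each
inducing a connected subgraph, and every edge of `G` lifts to an edge of `X_f(G)`. Given a cut `S`
of `X_f(G)`, call a gadget split if `S` cuts one of its inner edges, and let `T` be the set of
vertices of `G` whose gadget lies mostly in `S`. An unsplit gadget lies on one side of `S`, so
`|S| ≤ 10 |T| + 5 · #split` and likewise for the complements; and an edge of `G` leaving `T`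
either ends at a split gadget (at most three per gadget) or lifts to an edge of `X_f(G)` leaving
`S`. So either the cut of `S` is large compared with `min(|S|, |Sᶜ|)`, and `Ex(G) ≤ 3` suffices,
or `T` is a cut of `G` of comparable balance and at most three times the size. Either way
`Ex(G) ≤ 45 Ex(X_f(G))`.
-/

open SimpleGraph

variable {V : Type*} [Fintype V] [DecidableEq V]

/-- Vertices of the CFI graph `X_f(G)`: a middle vertex `(v, T)` for each vertex `v`
of `G` and each even subset `T` of the neighbors of `v` (encoding the even-parity
bit-vector `b_u = [u ∈ T]`), and an edge vertex `(v, u, b)` for each directed edge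
`(v,u)` of `G` and `b ∈ {0,1}`. -/
def CFIVert (G : SimpleGraph V) [DecidableRel G.Adj] : Type _ :=
  {x : (V × Finset V) ⊕ (V × V × Bool) //
    Sum.elim (fun p => p.2 ⊆ G.neighborFinset p.1 ∧ Even p.2.card)
      (fun p => G.Adj p.1 p.2.1) x}

/-- The CFI graph `X_f(G)` (as an uncolored graph this is `Y_f(G)`): middle vertex
`v_T` is adjacent to edge vertex `(v,u)_b` iff `b = [u ∈ T]`, and edge vertices
`(v,u)_b` and `(u,v)_{b ⊕ f((u,v))}` are joined for every edge `(u,v)` of `G`. -/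
def CFIGraph (G : SimpleGraph V) [DecidableRel G.Adj] (f : Sym2 V → Bool) :
    SimpleGraph (CFIVert G) :=
  SimpleGraph.fromRel fun a b =>
    match a.1, b.1 with
    | .inl (v, T), .inr (w, u, c) => v = w ∧ c = decide (u ∈ T)
    | .inr (v, u, c), .inr (v', u', c') => v = u' ∧ u = v' ∧ c' = (c ^^ f s(v, u))
    | _, _ => False

/-- The coloring of `X_f(G)`: each middle vertex of the gadget at `v` is colored by
`v`, and the pair of edge vertices `(v,u)_0, (v,u)_1` is colored by `(v,u)`. -/
def CFIColor (G : SimpleGraph V) [DecidableRel G.Adj] : CFIVert G → V ⊕ (V × V) :=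
  fun a => Sum.elim (fun p => Sum.inl p.1) (fun p => Sum.inr (p.1, p.2.1)) a.1

/-- `f : E(G) → {0,1}` has even parity if the number of edges with `f(e) = 1` is even. -/
def EvenParity (G : SimpleGraph V) [DecidableRel G.Adj] (f : Sym2 V → Bool) : Prop :=
  Even ((G.edgeFinset.filter fun e => f e = true).card)

noncomputable def cutCount {V : Type*} (G : SimpleGraph V) (S : Set V) : ℕ :=
  {p : V × V | p.1 ∈ S ∧ p.2 ∉ S ∧ G.Adj p.1 p.2}.ncard

noncomputable def expSet {V : Type*} (G : SimpleGraph V) (S : Set V) : ℝ :=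
  (cutCount G S : ℝ) / (min S.ncard Sᶜ.ncard : ℕ)

noncomputable def expG {V : Type*} (G : SimpleGraph V) : ℝ :=
  ⨅ S : {S : Set V // S.Nonempty ∧ S ≠ Set.univ}, expSet G S.1

open Finset

lemma expSet_nonneg {α : Type*} (H : SimpleGraph α) (S : Set α) : 0 ≤ expSet H S := by
  rw [expSet]; positivity

lemma expG_nonneg {α : Type*} (H : SimpleGraph α) : 0 ≤ expG H :=
  Real.iInf_nonneg fun S => expSet_nonneg H S.1

section Expansion

variable {α : Type*} [Fintype α] [DecidableEq α] (H : SimpleGraph α) [DecidableRel H.Adj]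

def cutPairs (S : Finset α) : Finset (α × α) := {p | p.1 ∈ S ∧ p.2 ∉ S ∧ H.Adj p.1 p.2}

lemma cutCount_coe (S : Finset α) : cutCount H S = #(cutPairs H S) := by
  rw [cutCount, ← Set.ncard_coe_finset]
  congr 1
  ext p
  simp [cutPairs]

lemma expSet_coe (S : Finset α) : expSet H S = #(cutPairs H S) / (min #S #Sᶜ : ℕ) := by
  rw [expSet, cutCount_coe, ← coe_compl, Set.ncard_coe_finset, Set.ncard_coe_finset]

lemma expG_mul_le_card_cutPairs {S : Finset α} (hS : S.Nonempty) (hSc : Sᶜ.Nonempty) :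
    expG H * (min #S #Sᶜ : ℕ) ≤ #(cutPairs H S) := by
  have hbdd : BddBelow (Set.range fun S : {S : Set α // S.Nonempty ∧ S ≠ Set.univ} =>
      expSet H S.1) := ⟨0, by rintro _ ⟨S, rfl⟩; exact expSet_nonneg H S.1⟩
  have hle : expG H ≤ expSet H S :=
    ciInf_le hbdd ⟨S, by simpa using hS, by rw [Ne, coe_eq_univ]; rintro rfl; simp at hSc⟩
  rw [expSet_coe] at hle
  have hpos : (0 : ℝ) < (min #S #Sᶜ : ℕ) := by
    exact_mod_cast lt_min hS.card_pos hSc.card_pos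
  exact (le_div_iff₀ hpos).1 hle

lemma card_cutPairs_singleton_le (v : α) : #(cutPairs H {v}) ≤ H.degree v := by
  rw [← H.card_neighborFinset_eq_degree]
  refine card_le_card_of_injOn Prod.snd (fun p hp => ?_) (fun p hp q hq h => ?_)
  · simp only [cutPairs, coe_filter, mem_univ, true_and, mem_singleton, Set.mem_ofPred_eq] at hp
    simpa [hp.1] using hp.2.2
  · simp only [cutPairs, coe_filter, mem_univ, true_and, mem_singleton, Set.mem_ofPred_eq] at hp hq
    exact Prod.ext (hp.1.trans hq.1.symm) h

lemma expG_le_of_degree_le {d : ℕ} (hd : ∀ v, H.degree v ≤ d) : expG H ≤ d := by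
  rcases subsingleton_or_nontrivial α with hα | hα
  · have : IsEmpty {S : Set α // S.Nonempty ∧ S ≠ Set.univ} :=
      ⟨fun ⟨S, ⟨x, hx⟩, hS⟩ => hS (Set.eq_univ_of_forall fun y => Subsingleton.elim x y ▸ hx)⟩
    rw [expG, Real.iInf_of_isEmpty]
    exact Nat.cast_nonneg d
  obtain ⟨v, w, hvw⟩ := exists_pair_ne α
  have hc : ({v}ᶜ : Finset α).Nonempty := ⟨w, by simpa using hvw.symm⟩
  have key := expG_mul_le_card_cutPairs H (singleton_nonempty v) hc
  rw [card_singleton, min_eq_left hc.card_pos, Nat.cast_one, mul_one] at key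
  exact key.trans (by exact_mod_cast (card_cutPairs_singleton_le H v).trans (hd v))

end Expansion

lemma SimpleGraph.Preconnected.subset_or_disjoint {β : Type*} {H : SimpleGraph β} {s S : Set β}
    (hs : (H.induce s).Preconnected) (hS : ∀ x ∈ s, ∀ y ∈ s, H.Adj x y → x ∈ S → y ∈ S) :
    s ⊆ S ∨ Disjoint s S := by
  by_contra! h
  obtain ⟨⟨x, hxs, hxS⟩, ⟨y, hys, hyS⟩⟩ := And.intro (Set.not_subset.1 h.1)
    (Set.not_disjoint_iff.1 h.2)
  obtain ⟨p⟩ := hs ⟨y, hys⟩ ⟨x, hxs⟩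
  obtain ⟨e, -, he, he'⟩ := p.exists_boundary_dart {z | z.1 ∈ S} hyS hxS
  exact he' (hS _ e.fst.2 _ e.snd.2 e.adj he)

section FiberedCover

variable {α β : Type*} [DecidableEq α]

def innerCutPairs [Fintype β] [DecidableEq β] (H : SimpleGraph β) [DecidableRel H.Adj]
    (π : β → α) (S : Finset β) : Finset (β × β) :=
  {p ∈ cutPairs H S | π p.1 = π p.2}

def crossCutPairs [Fintype β] [DecidableEq β] (H : SimpleGraph β) [DecidableRel H.Adj]
    (π : β → α) (S : Finset β) : Finset (β × β) :=
  {p ∈ cutPairs H S | π p.1 ≠ π p.2}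

def splitBase [Fintype β] [DecidableEq β] (H : SimpleGraph β) [DecidableRel H.Adj]
    (π : β → α) (S : Finset β) : Finset α :=
  (innerCutPairs H π S).image (π ∘ Prod.fst)

def majorityBase [Fintype α] [Fintype β] (π : β → α) (S : Finset β) : Finset α :=
  {v | #{x | π x = v} < 2 * #{x ∈ S | π x = v}}

variable {π : β → α} {S : Finset β}

lemma card_fiber_inter_add_card_fiber_compl [Fintype β] [DecidableEq β] (v : α) :
    #{x ∈ S | π x = v} + #{x ∈ Sᶜ | π x = v} = #{x | π x = v} := by
  rw [← card_union_of_disjoint (disjoint_filter_filter disjoint_compl_right), ← filter_union,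
    union_compl]

lemma card_fiber_inter_eq_zero {v : α} : #{x ∈ S | π x = v} = 0 ↔ ∀ x, π x = v → x ∉ S := by
  simp only [card_eq_zero, filter_eq_empty_iff]
  exact ⟨fun h x hx hS => h hS hx, fun h x hS hx => h x hx hS⟩

lemma card_fiber_compl_eq_zero [Fintype β] [DecidableEq β] {v : α} :
    #{x ∈ Sᶜ | π x = v} = 0 ↔ ∀ x, π x = v → x ∈ S := by
  simp only [card_eq_zero, filter_eq_empty_iff, mem_compl]
  exact ⟨fun h x hx => by_contra fun hS => h hS hx, fun h x hS hx => hS (h x hx)⟩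

variable [Fintype β] [DecidableEq β] {H : SimpleGraph β} [DecidableRel H.Adj]

lemma fiber_subset_or_disjoint {v : α} (hconn : (H.induce {x | π x = v}).Preconnected)
    (hv : v ∉ splitBase H π S) : (∀ x, π x = v → x ∈ S) ∨ (∀ x, π x = v → x ∉ S) := by
  refine (hconn.subset_or_disjoint (S := S) fun x hx y hy hxy hxS => ?_).imp
    (fun h x hx => h hx) (fun h x hx hxS => Set.disjoint_left.1 h hx hxS)
  by_contra hyS
  refine hv (mem_image.2 ⟨(x, y), ?_, hx⟩)
  simp only [innerCutPairs, cutPairs, mem_filter, mem_univ, true_and]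
  exact ⟨⟨hxS, hyS, hxy⟩, hx.trans hy.symm⟩

lemma card_innerCutPairs_add_card_crossCutPairs (H : SimpleGraph β) [DecidableRel H.Adj]
    (π : β → α) (S : Finset β) :
    #(innerCutPairs H π S) + #(crossCutPairs H π S) = #(cutPairs H S) :=
  card_filter_add_card_filter_not _

variable [Fintype α] {G : SimpleGraph α} [DecidableRel G.Adj] {K d : ℕ}

lemma mem_of_mem_majorityBase {v : α} (hconn : (H.induce {x | π x = v}).Preconnected)
    (hT : v ∈ majorityBase π S) (hv : v ∉ splitBase H π S) {x : β} (hx : π x = v) : x ∈ S := by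
  refine (fiber_subset_or_disjoint hconn hv).resolve_right (fun h => ?_) x hx
  simp only [majorityBase, mem_filter, mem_univ, true_and, card_fiber_inter_eq_zero.2 h] at hT
  omega

lemma notMem_of_notMem_majorityBase {v : α} (hconn : (H.induce {x | π x = v}).Preconnected)
    (hT : v ∉ majorityBase π S) (hv : v ∉ splitBase H π S) {x : β} (hx : π x = v) : x ∉ S := by
  refine (fiber_subset_or_disjoint hconn hv).elim (fun h => ?_) (fun h => h x hx)
  have hsum := card_fiber_inter_add_card_fiber_compl (S := S) (π := π) v
  rw [card_fiber_compl_eq_zero.2 h] at hsum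
  simp only [majorityBase, mem_filter, mem_univ, true_and, not_lt] at hT
  exact card_fiber_inter_eq_zero.1 (by omega) x hx

lemma two_mul_card_le_of_forall_fiber {A : Finset β} {T : Finset α}
    (h : ∀ v, 2 * #{x ∈ A | π x = v} ≤
      (if v ∈ splitBase H π S then K else 0) + (if v ∈ T then 2 * K else 0)) :
    2 * #A ≤ K * #(innerCutPairs H π S) + 2 * K * #T :=
  calc 2 * #A = ∑ v, 2 * #{x ∈ A | π x = v} := by
        rw [card_eq_sum_card_fiberwise fun x _ => mem_univ (π x), mul_sum]
    _ ≤ ∑ v, ((if v ∈ splitBase H π S then K else 0) + (if v ∈ T then 2 * K else 0)) :=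
        sum_le_sum fun v _ => h v
    _ = K * #(splitBase H π S) + 2 * K * #T := by
        rw [sum_add_distrib, sum_ite_mem, sum_ite_mem, univ_inter, univ_inter, sum_const,
          sum_const, smul_eq_mul, smul_eq_mul, mul_comm, mul_comm #T]
    _ ≤ K * #(innerCutPairs H π S) + 2 * K * #T := by
        gcongr
        exact card_image_le

lemma two_mul_card_le_majorityBase (hK : ∀ v, #{x | π x = v} ≤ K)
    (hconn : ∀ v, (H.induce {x | π x = v}).Preconnected) :
    2 * #S ≤ K * #(innerCutPairs H π S) + 2 * K * #(majorityBase π S) := by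
  refine two_mul_card_le_of_forall_fiber fun v => ?_
  have hsum := card_fiber_inter_add_card_fiber_compl (S := S) (π := π) v
  have hKv := hK v
  by_cases hT : v ∈ majorityBase π S
  · simp only [hT, if_true]
    split_ifs <;> omega
  by_cases hs : v ∈ splitBase H π S
  · simp only [majorityBase, mem_filter, mem_univ, true_and, not_lt] at hT
    simp only [hs, if_true]
    split_ifs <;> omega
  · have := card_fiber_inter_eq_zero.2 fun x => notMem_of_notMem_majorityBase (hconn v) hT hs
    simp only [hs, hT, if_false]
    omega

lemma two_mul_card_compl_le_majorityBase_compl (hK : ∀ v, #{x | π x = v} ≤ K)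
    (hconn : ∀ v, (H.induce {x | π x = v}).Preconnected) :
    2 * #Sᶜ ≤ K * #(innerCutPairs H π S) + 2 * K * #(majorityBase π S)ᶜ := by
  refine two_mul_card_le_of_forall_fiber fun v => ?_
  have hsum := card_fiber_inter_add_card_fiber_compl (S := S) (π := π) v
  have hKv := hK v
  by_cases hT : v ∈ majorityBase π S
  · by_cases hs : v ∈ splitBase H π S
    · simp only [majorityBase, mem_filter, mem_univ, true_and] at hT
      simp only [hs, if_true]
      split_ifs <;> omega
    · have := card_fiber_compl_eq_zero.2 fun x => mem_of_mem_majorityBase (hconn v) hT hs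
      simp only [hs, mem_compl, hT, if_false, not_true]
      omega
  · simp only [mem_compl, hT, not_false_eq_true, if_true]
    split_ifs <;> omega

lemma card_cutPairs_majorityBase_le (hd : ∀ v, G.degree v ≤ d)
    (hconn : ∀ v, (H.induce {x | π x = v}).Preconnected)
    (hlift : ∀ u w, G.Adj u w → ∃ x y, π x = u ∧ π y = w ∧ H.Adj x y) :
    #(cutPairs G (majorityBase π S)) ≤ d * #(innerCutPairs H π S) + #(crossCutPairs H π S) := by
  set T := majorityBase π S
  set split := splitBase H π S
  -- An edge leaving `T` is charged to an endpoint with a split fiber, at most `d` edges per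
  -- vertex since `T` fixes which end that vertex is; every other one lifts to an edge leaving `S`.
  have hsub : cutPairs G T ⊆ split.biUnion (fun w => (G.neighborFinset w).image
      fun u => if w ∈ T then (w, u) else (u, w)) ∪ (crossCutPairs H π S).image (Prod.map π π) := by
    rintro ⟨u, w⟩ hp
    simp only [cutPairs, mem_filter, mem_univ, true_and] at hp
    obtain ⟨huT, hwT, huw⟩ := hp
    rw [mem_union, mem_biUnion]
    by_cases hu : u ∈ split
    · exact .inl ⟨u, hu, mem_image.2 ⟨w, (G.mem_neighborFinset u w).2 huw, by simp [huT]⟩⟩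
    by_cases hw : w ∈ split
    · exact .inl ⟨w, hw, mem_image.2 ⟨u, (G.mem_neighborFinset w u).2 huw.symm, by simp [hwT]⟩⟩
    obtain ⟨x, y, rfl, rfl, hxy⟩ := hlift u w huw
    refine .inr (mem_image.2 ⟨(x, y), ?_, rfl⟩)
    simp only [crossCutPairs, cutPairs, mem_filter, mem_univ, true_and]
    exact ⟨⟨mem_of_mem_majorityBase (hconn _) huT hu rfl,
      notMem_of_notMem_majorityBase (hconn _) hwT hw rfl, hxy⟩, huw.ne⟩
  calc #(cutPairs G T) ≤ ∑ _w ∈ split, d + #(crossCutPairs H π S) :=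
        (card_le_card hsub).trans <| (card_union_le _ _).trans <| add_le_add
          (card_biUnion_le.trans <| sum_le_sum fun w _ =>
            card_image_le.trans ((G.card_neighborFinset_eq_degree w).trans_le (hd w)))
          card_image_le
    _ ≤ d * #(innerCutPairs H π S) + #(crossCutPairs H π S) := by
        rw [sum_const, smul_eq_mul, mul_comm]
        gcongr
        exact card_image_le


lemma two_mul_min_card_le_min_card_majorityBase (hK : ∀ v, #{x | π x = v} ≤ K)
    (hconn : ∀ v, (H.induce {x | π x = v}).Preconnected) :
    2 * min #S #Sᶜ ≤ K * #(innerCutPairs H π S) +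
      2 * K * min #(majorityBase π S) #(majorityBase π S)ᶜ := by
  have hS := two_mul_card_le_majorityBase (S := S) hK hconn
  have hSc := two_mul_card_compl_le_majorityBase_compl (S := S) hK hconn
  rcases min_cases #(majorityBase π S) #(majorityBase π S)ᶜ with ⟨h, -⟩ | ⟨h, -⟩ <;> rw [h] <;>
    omega

lemma expG_mul_min_card_majorityBase_le (hd : ∀ v, G.degree v ≤ d)
    (hconn : ∀ v, (H.induce {x | π x = v}).Preconnected)
    (hlift : ∀ u w, G.Adj u w → ∃ x y, π x = u ∧ π y = w ∧ H.Adj x y)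
    (hT : 0 < min #(majorityBase π S) #(majorityBase π S)ᶜ) :
    expG G * (min #(majorityBase π S) #(majorityBase π S)ᶜ : ℕ) ≤ (d * #(cutPairs H S) : ℕ) := by
  rcases Nat.eq_zero_or_pos d with rfl | hd0
  · have hE : expG G = 0 := le_antisymm (by simpa using expG_le_of_degree_le G hd) (expG_nonneg G)
    simp [hE]
  have hcutG := card_cutPairs_majorityBase_le (S := S) hd hconn hlift
  have hc := card_innerCutPairs_add_card_crossCutPairs H π S
  refine (expG_mul_le_card_cutPairs G (card_pos.1 (lt_min_iff.1 hT).1)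
    (card_pos.1 (lt_min_iff.1 hT).2)).trans ?_
  exact_mod_cast hcutG.trans (by nlinarith)

lemma two_mul_expG_mul_min_card_le (hK : ∀ v, #{x | π x = v} ≤ K) (hd : ∀ v, G.degree v ≤ d)
    (hconn : ∀ v, (H.induce {x | π x = v}).Preconnected)
    (hlift : ∀ u w, G.Adj u w → ∃ x y, π x = u ∧ π y = w ∧ H.Adj x y)
    (hS : S.Nonempty) (hSc : Sᶜ.Nonempty) :
    2 * expG G * (min #S #Sᶜ : ℕ) ≤ 3 * K * d * #(cutPairs H S) := by
  set T := majorityBase π S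
  set m := min #S #Sᶜ
  set c := #(cutPairs H S)
  have hm : 2 * m ≤ K * #(innerCutPairs H π S) + 2 * K * min #T #Tᶜ :=
    two_mul_min_card_le_min_card_majorityBase hK hconn
  have hKc : K * #(innerCutPairs H π S) ≤ K * c := Nat.mul_le_mul_left K (card_filter_le _ _)
  -- A large cut is handled by `Ex(G) ≤ d`; otherwise `T` is a balanced cut of `G`.
  rcases le_or_gt (2 * m) (3 * K * c) with hsmall | hlarge
  · calc 2 * expG G * m ≤ d * (2 * m : ℕ) := by
          push_cast; nlinarith [expG_le_of_degree_le G hd, expG_nonneg G]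
      _ ≤ d * (3 * K * c : ℕ) := by gcongr
      _ = 3 * K * d * c := by push_cast; ring
  have hmT : 2 * m ≤ 3 * K * min #T #Tᶜ := by linarith
  have hT : 0 < min #T #Tᶜ := Nat.pos_of_ne_zero fun h => by
    rw [h] at hmT
    exact (lt_min hS.card_pos hSc.card_pos).ne' (by omega)
  calc 2 * expG G * m = expG G * (2 * m : ℕ) := by push_cast; ring
    _ ≤ expG G * (3 * K * min #T #Tᶜ : ℕ) := by gcongr; exact expG_nonneg G
    _ = 3 * K * (expG G * (min #T #Tᶜ : ℕ)) := by push_cast; ring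
    _ ≤ 3 * K * (d * c : ℕ) := by gcongr; exact expG_mul_min_card_majorityBase_le hd hconn hlift hT
    _ = 3 * K * d * c := by push_cast; ring

theorem expG_le_mul_expG_of_preconnected_fibers (hK : ∀ v, #{x | π x = v} ≤ K)
    (hd : ∀ v, G.degree v ≤ d)
    (hconn : ∀ v, (H.induce {x | π x = v}).Preconnected)
    (hlift : ∀ u w, G.Adj u w → ∃ x y, π x = u ∧ π y = w ∧ H.Adj x y) :
    expG G ≤ 3 * K * d / 2 * expG H := by
  rcases isEmpty_or_nonempty {S : Set β // S.Nonempty ∧ S ≠ Set.univ} with hβ | hβ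
  · have hG : ∀ v, G.degree v ≤ 0 := fun v => Nat.le_zero.2 <| Nat.eq_zero_of_not_pos fun hv => by
      obtain ⟨w, hvw⟩ := (G.degree_pos_iff_exists_adj v).1 hv
      obtain ⟨x, y, -, -, hxy⟩ := hlift v w hvw
      exact hβ.false ⟨{x}, Set.singleton_nonempty x, fun h =>
        hxy.ne (Set.mem_singleton_iff.1 (h ▸ Set.mem_univ y)).symm⟩
    conv_rhs => rw [expG, Real.iInf_of_isEmpty, mul_zero]
    exact_mod_cast expG_le_of_degree_le G hG
  conv_rhs => rw [expG, Real.mul_iInf_of_nonneg (by positivity)]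
  refine le_ciInf fun ⟨S, hS, hSu⟩ => ?_
  lift S to Finset β using S.toFinite
  rw [coe_nonempty] at hS
  have hSc : Sᶜ.Nonempty :=
    (compl_ne_univ_iff_nonempty _).1 (by rwa [compl_compl, Ne, ← coe_eq_univ])
  have hm : (0 : ℝ) < (min #S #Sᶜ : ℕ) := by exact_mod_cast lt_min hS.card_pos hSc.card_pos
  have key := two_mul_expG_mul_min_card_le hK hd hconn hlift hS hSc
  rw [expSet_coe, ← mul_div_assoc, le_div_iff₀ hm]
  linarith

end FiberedCover

namespace CFIVert

variable {G : SimpleGraph V} [DecidableRel G.Adj]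

open Classical in
noncomputable instance : Fintype (CFIVert G) := inferInstanceAs (Fintype (Subtype _))

def base (x : CFIVert G) : V := Sum.elim Prod.fst Prod.fst x.1

def mid (v : V) (T : Finset V) (hT : T ⊆ G.neighborFinset v) (hTe : Even #T) : CFIVert G :=
  ⟨.inl (v, T), hT, hTe⟩

def edge (v u : V) (b : Bool) (h : G.Adj v u) : CFIVert G := ⟨.inr (v, u, b), h⟩

lemma adj_mid_edge (f : Sym2 V → Bool) {v u : V} {T : Finset V} (hT : T ⊆ G.neighborFinset v)
    (hTe : Even #T) (h : G.Adj v u) :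
    (CFIGraph G f).Adj (mid v T hT hTe) (edge v u (decide (u ∈ T)) h) := by
  simp only [CFIGraph, fromRel_adj]
  refine ⟨fun he => ?_, .inl ⟨rfl, rfl⟩⟩
  simpa [mid, edge] using congrArg Subtype.val he

lemma adj_edge_edge (f : Sym2 V → Bool) {v u : V} (b : Bool) (h : G.Adj v u) :
    (CFIGraph G f).Adj (edge v u b h) (edge u v (b ^^ f s(v, u)) h.symm) := by
  simp only [CFIGraph, fromRel_adj]
  refine ⟨fun he => h.ne ?_, .inl ⟨rfl, rfl, rfl⟩⟩
  have hval := congrArg Subtype.val he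
  simp only [edge, Sum.inr.injEq, Prod.mk.injEq] at hval
  exact hval.1

lemma card_fiber_le {v : V} (hv : G.degree v = 3) : #{x : CFIVert G | x.base = v} ≤ 10 := by
  set N := G.neighborFinset v
  have hN : #N = 3 := by rwa [G.card_neighborFinset_eq_degree]
  have hmaps : ∀ x ∈ (univ.filter fun x : CFIVert G => x.base = v),
      x.1 ∈ ({v} ×ˢ (N.powersetCard 0 ∪ N.powersetCard 2)).disjSum ({v} ×ˢ (N ×ˢ univ)) := by
    intro x hx
    have hxv : x.base = v := (mem_filter.1 hx).2
    obtain ⟨⟨w, T⟩ | ⟨w, u, b⟩, h⟩ := x <;> obtain rfl : w = v := hxv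
    · obtain ⟨hT, hTe⟩ : T ⊆ N ∧ Even #T := h
      have : #T ≤ 3 := hN ▸ card_le_card hT
      simp only [inl_mem_disjSum, mem_product, mem_singleton, mem_union, mem_powersetCard,
        true_and]
      rw [Nat.even_iff] at hTe
      exact (show #T = 0 ∨ #T = 2 by omega).imp (⟨hT, ·⟩) (⟨hT, ·⟩)
    · simpa [N] using h
  calc #{x : CFIVert G | x.base = v}
      ≤ #(({v} ×ˢ (N.powersetCard 0 ∪ N.powersetCard 2)).disjSum ({v} ×ˢ (N ×ˢ univ))) :=
        card_le_card_of_injOn Subtype.val hmaps Subtype.val_injective.injOn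
    _ ≤ 10 := by
        rw [card_disjSum, card_product, card_product, card_product, card_singleton, hN,
          card_univ, Fintype.card_bool]
        have := card_union_le (N.powersetCard 0) (N.powersetCard 2)
        rw [card_powersetCard, card_powersetCard, hN] at this
        simp only [Nat.choose] at this
        omega

lemma preconnected_induce_fiber (f : Sym2 V → Bool) {v : V} (hv : 3 ≤ G.degree v) :
    ((CFIGraph G f).induce {x | x.base = v}).Preconnected := by
  set F := (CFIGraph G f).induce {x : CFIVert G | x.base = v}
  set N := G.neighborFinset v
  have hN : 3 ≤ #N := by rwa [G.card_neighborFinset_eq_degree]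
  let o : {x : CFIVert G | x.base = v} := ⟨mid v ∅ (empty_subset N) .zero, rfl⟩
  have step {x y : CFIVert G} (hx : x.base = v) (hy : y.base = v) (h : (CFIGraph G f).Adj x y) :
      F.Reachable ⟨x, hx⟩ ⟨y, hy⟩ :=
    (induce_adj.2 h).reachable
  have edge_false (u : V) (hu : G.Adj v u) : F.Reachable o ⟨edge v u false hu, rfl⟩ :=
    step rfl rfl (by simpa using adj_mid_edge f (empty_subset N) .zero hu)
  have mid_of_not_subset {T : Finset V} (hT : T ⊆ N) (hTe : Even #T) (hNT : ¬N ⊆ T) :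
      F.Reachable o ⟨mid v T hT hTe, rfl⟩ := by
    obtain ⟨z, hz, hzT⟩ := not_subset.1 hNT
    have hvz : G.Adj v z := (G.mem_neighborFinset v z).1 hz
    exact (edge_false z hvz).trans
      (step rfl rfl (by simpa [hzT] using adj_mid_edge f hT hTe hvz)).symm
  have edge_true (u : V) (hu : G.Adj v u) : F.Reachable o ⟨edge v u true hu, rfl⟩ := by
    have huN : u ∈ N := (G.mem_neighborFinset v u).2 hu
    obtain ⟨z, hz, hzu⟩ := exists_mem_ne (s := N) (by omega) u
    have hT : {u, z} ⊆ N := insert_subset huN (singleton_subset_iff.2 hz)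
    have hNT : ¬N ⊆ {u, z} := fun h => by
      have := card_le_card h
      have := card_le_two (a := u) (b := z)
      omega
    exact (mid_of_not_subset hT (by rw [card_pair hzu.symm]; exact even_two) hNT).trans
      (step rfl rfl (by simpa using adj_mid_edge f hT _ hu))
  have reach : ∀ x : {x : CFIVert G | x.base = v}, F.Reachable o x := by
    rintro ⟨⟨⟨w, T⟩ | ⟨w, u, b⟩, h⟩, hxv⟩ <;> obtain rfl : w = v := hxv
    · obtain ⟨hT, hTe⟩ : T ⊆ N ∧ Even #T := h
      by_cases hNT : N ⊆ T
      · obtain ⟨u, hu⟩ := card_pos.1 (by omega : 0 < #N)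
        have hvu : G.Adj w u := (G.mem_neighborFinset w u).1 hu
        have hadj := adj_mid_edge f hT hTe hvu
        rw [decide_eq_true (hNT hu)] at hadj
        exact (edge_true u hvu).trans (step rfl rfl hadj).symm
      · exact mid_of_not_subset hT hTe hNT
    · cases b
      · exact edge_false u h
      · exact edge_true u h
  exact fun x y => (reach x).symm.trans (reach y)

lemma exists_adj_of_adj (f : Sym2 V → Bool) {u w : V} (h : G.Adj u w) :
    ∃ x y : CFIVert G, x.base = u ∧ y.base = w ∧ (CFIGraph G f).Adj x y :=
  ⟨edge u w false h, edge w u _ h.symm, rfl, rfl, adj_edge_edge f false h⟩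

end CFIVert

theorem cfi_expansion_even_general {V : Type*} [Fintype V] [DecidableEq V]
    (G : SimpleGraph V) [DecidableRel G.Adj]
    (hreg : ∀ v, G.degree v = 3)
    (f : Sym2 V → Bool) :
    expG G / 54 ≤ expG (CFIGraph G f) := by
  classical
  have h : expG G ≤ 45 * expG (CFIGraph G f) := by
    have := expG_le_mul_expG_of_preconnected_fibers (H := CFIGraph G f)
      (fun v => CFIVert.card_fiber_le (hreg v)) (fun v => (hreg v).le)
      (fun v => CFIVert.preconnected_induce_fiber f (hreg v).ge)
      (fun _ _ huw => CFIVert.exists_adj_of_adj f huw)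
    norm_num at this
    exact this
  linarith [expG_nonneg G]

/-- For a 3-regular graph `G` and an even-parity twisting function `f`,
the CFI graph `X_f(G)` has edge expansion at least `Ex(G)/54`. -/
theorem cfi_expansion_even {V : Type*} [Fintype V] [DecidableEq V]
    (G : SimpleGraph V) [DecidableRel G.Adj]
    (hreg : ∀ v, G.degree v = 3)
    (f : Sym2 V → Bool) (hpar : EvenParity G f) :
    expG G / 54 ≤ expG (CFIGraph G f) :=
  cfi_expansion_even_general G hreg f
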